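/- Let G be a connected graph and H a graph, both with at least two vertices, with at least one of them not complete. Then χ_μ(G ∘ H) = 2, where G ∘ H is the lexicographic product. -/

import Mathlib

open SimpleGraph

variable {V W : Type*}

/-- Two vertices of `X` are `X`-visible if some geodesic between them has all
internal vertices outside `X`; `X` is a mutual-visibility set if this holds
for every reachable pair of vertices of `X`. -/
def IsMVSet (G : SimpleGraph V) (X : Set V) : Prop :=
  ∀ x ∈ X, ∀ y ∈ X, x ≠ y → G.Reachable x y →
    ∃ p : G.Walk x y, p.length = G.dist x y ∧
      ∀ z ∈ p.support, z ≠ x → z ≠ y → z ∉ X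

/-- An independent mutual-visibility set. -/
def IsIMVSet (G : SimpleGraph V) (X : Set V) : Prop :=
  (∀ x ∈ X, ∀ y ∈ X, ¬ G.Adj x y) ∧ IsMVSet G X

/-- The mutual-visibility chromatic number: the least `k` such that the vertex
set partitions into `k` mutual-visibility sets. -/
noncomputable def mvChrom (G : SimpleGraph V) : ℕ :=
  sInf {k | ∃ f : V → Fin k, ∀ i, IsMVSet G (f ⁻¹' {i})}

/-- The independent mutual-visibility chromatic number. -/
noncomputable def imvChrom (G : SimpleGraph V) : ℕ :=
  sInf {k | ∃ f : V → Fin k, ∀ i, IsIMVSet G (f ⁻¹' {i})}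

/-- The chromatic number, as a natural number. -/
noncomputable def chromNat (G : SimpleGraph V) : ℕ :=
  sInf {k | G.Colorable k}

/-- The independent mutual-visibility number `μᵢ(G)`. -/
noncomputable def imvNum (G : SimpleGraph V) : ℕ :=
  sSup {n | ∃ s : Finset V, IsIMVSet G ↑s ∧ s.card = n}

/-- The independence number `α(G)`. -/
noncomputable def indepNum (G : SimpleGraph V) : ℕ :=
  sSup {n | ∃ s : Finset V, (∀ x ∈ s, ∀ y ∈ s, ¬ G.Adj x y) ∧ s.card = n}

/-- The lexicographic product `G ∘ H`. -/
def lexProd (G : SimpleGraph V) (H : SimpleGraph W) : SimpleGraph (V × W) where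
  Adj a b := G.Adj a.1 b.1 ∨ (a.1 = b.1 ∧ H.Adj a.2 b.2)
  symm := by
    constructor
    rintro a b (h | ⟨h1, h2⟩)
    · exact Or.inl h.symm
    · exact Or.inr ⟨h1.symm, h2.symm⟩
  loopless := by
    constructor
    rintro a (h | ⟨-, h⟩)
    · exact G.irrefl h
    · exact H.irrefl h

/-! If `G` has no isolated vertex, any two vertices of `G ∘ H` are joined by a geodesic whose
internal vertices all lie in a prescribed layer `V × {w}`: a geodesic of `G` lifts to `G ∘ H`
with its internal vertices moved into that layer, and two non-adjacent vertices of one fibre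
`{g} × W` are at distance two through a neighbour of `g` in the layer. So every set missing a
layer is a mutual-visibility set, and colouring by whether the second coordinate equals `w₀`
gives a partition into two of them. One part is impossible, since a connected graph in which
all vertices are mutually visible is complete, and `G ∘ H` is connected and not complete. -/

section LexProd

variable {G : SimpleGraph V} {H : SimpleGraph W}

lemma lexProd_adj_of_adj {g g' : V} (hadj : G.Adj g g') (h h' : W) :
    (lexProd G H).Adj (g, h) (g', h') :=
  Or.inl hadj

lemma exists_walk_fst_of_lexProd_walk {a b : V × W} (P : (lexProd G H).Walk a b) :
    ∃ p : G.Walk a.1 b.1, p.length ≤ P.length := by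
  induction P with
  | nil => exact ⟨.nil, le_rfl⟩
  | cons hadj _ ih =>
    obtain ⟨p, hp⟩ := ih
    rcases id hadj with hadj | ⟨heq, -⟩
    · exact ⟨.cons hadj p, Nat.succ_le_succ hp⟩
    · exact ⟨p.copy heq.symm rfl, (p.length_copy _ _).trans_le (hp.trans (Nat.le_succ _))⟩

lemma lexProd_reachable_fst {a b : V × W} (hr : (lexProd G H).Reachable a b) :
    G.Reachable a.1 b.1 :=
  let ⟨P⟩ := hr
  let ⟨p, _⟩ := exists_walk_fst_of_lexProd_walk P
  ⟨p⟩

lemma dist_fst_le_lexProd_dist {a b : V × W} (hr : (lexProd G H).Reachable a b) :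
    G.dist a.1 b.1 ≤ (lexProd G H).dist a b := by
  obtain ⟨P, hP⟩ := hr.exists_walk_length_eq_dist
  obtain ⟨p, hp⟩ := exists_walk_fst_of_lexProd_walk P
  exact (dist_le p).trans (hP ▸ hp)

lemma exists_lexProd_walk_of_walk (w : W) {g g' : V} (p : G.Walk g g') (hp : ¬ p.Nil)
    (h h' : W) :
    ∃ P : (lexProd G H).Walk (g, h) (g', h'), P.length = p.length ∧
      ∀ z ∈ P.support, z = (g, h) ∨ z = (g', h') ∨ z.2 = w := by
  induction p generalizing h with
  | nil => simp at hp
  | cons e q ih =>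
    cases q with
    | nil =>
      refine ⟨.cons (lexProd_adj_of_adj e _ _) .nil, rfl, fun z hz => ?_⟩
      simp only [Walk.support_cons, Walk.support_nil, List.mem_cons, List.not_mem_nil,
        or_false] at hz
      tauto
    | cons e' q' =>
      obtain ⟨P, hPlen, hP⟩ := ih (by simp) w
      refine ⟨.cons (lexProd_adj_of_adj e _ _) P, by rw [Walk.length_cons, hPlen]; rfl, ?_⟩
      simp only [Walk.support_cons, List.mem_cons, forall_eq_or_imp, true_or, true_and]
      intro z hz
      rcases hP z hz with rfl | rfl | hzw
      · exact Or.inr (Or.inr rfl)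
      · exact Or.inr (Or.inl rfl)
      · exact Or.inr (Or.inr hzw)

lemma exists_lexProd_geodesic_through_layer (hG : ∀ g, ∃ g', G.Adj g g') (w : W)
    {a b : V × W} (hab : a ≠ b) (hr : (lexProd G H).Reachable a b) :
    ∃ P : (lexProd G H).Walk a b, P.length = (lexProd G H).dist a b ∧
      ∀ z ∈ P.support, z = a ∨ z = b ∨ z.2 = w := by
  rcases a with ⟨g, h⟩
  rcases b with ⟨g', h'⟩
  by_cases hadj : (lexProd G H).Adj (g, h) (g', h')
  · refine ⟨hadj.toWalk, (dist_eq_one_iff_adj.mpr hadj).symm, fun z hz => ?_⟩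
    simp only [Adj.toWalk, Walk.support_cons, Walk.support_nil, List.mem_cons,
      List.not_mem_nil, or_false] at hz
    tauto
  by_cases hg : g = g'
  · subst hg
    obtain ⟨g'', hg''⟩ := hG g
    let P : (lexProd G H).Walk (g, h) (g, h') :=
      .cons (v := (g'', w)) (lexProd_adj_of_adj hg'' _ _)
        (.cons (lexProd_adj_of_adj hg''.symm _ _) .nil)
    refine ⟨P, le_antisymm (hr.one_lt_dist_of_ne_of_not_adj hab hadj) (dist_le P),
      fun z hz => ?_⟩
    simp only [P, Walk.support_cons, Walk.support_nil, List.mem_cons, List.not_mem_nil,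
      or_false] at hz
    rcases hz with rfl | rfl | rfl <;> simp
  · obtain ⟨p, hp⟩ := (lexProd_reachable_fst hr).exists_walk_length_eq_dist
    obtain ⟨P, hPlen, hP⟩ := exists_lexProd_walk_of_walk w p (Walk.not_nil_of_ne hg) h h'
    refine ⟨P, le_antisymm ?_ (dist_le P), hP⟩
    rw [hPlen, hp]
    exact dist_fst_le_lexProd_dist hr

lemma isMVSet_lexProd_of_forall_snd_ne (hG : ∀ g, ∃ g', G.Adj g g') (w : W)
    {X : Set (V × W)} (hX : ∀ z ∈ X, z.2 ≠ w) : IsMVSet (lexProd G H) X := by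
  intro a _ b _ hab hr
  obtain ⟨P, hPlen, hP⟩ := exists_lexProd_geodesic_through_layer hG w hab hr
  refine ⟨P, hPlen, fun z hz hza hzb hzX => ?_⟩
  rcases hP z hz with rfl | rfl | hzw
  · exact hza rfl
  · exact hzb rfl
  · exact hX z hzX hzw

lemma lexProd_connected [Nontrivial V] [Nonempty W] (hconn : G.Connected) :
    (lexProd G H).Connected := by
  refine ⟨fun ⟨g, h⟩ ⟨g', h'⟩ => ?_⟩
  let layer : G →g lexProd G H := ⟨fun v => (v, h), fun hadj => lexProd_adj_of_adj hadj h h⟩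
  obtain ⟨g'', hg''⟩ := hconn.preconnected.exists_adj_of_nontrivial g'
  have hstep : (lexProd G H).Reachable (g', h) (g', h') :=
    ⟨.cons (v := (g'', h')) (lexProd_adj_of_adj hg'' _ _)
      (.cons (lexProd_adj_of_adj hg''.symm _ _) .nil)⟩
  exact ((hconn g g').map layer).trans hstep

lemma lexProd_ne_top [Nonempty V] [Nonempty W] (hnc : G ≠ ⊤ ∨ H ≠ ⊤) :
    lexProd G H ≠ ⊤ := by
  rw [ne_top_iff_exists_not_adj]
  rcases hnc with hG | hH
  · obtain ⟨a, b, hab, hnadj⟩ := ne_top_iff_exists_not_adj.mp hG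
    let w : W := Classical.arbitrary W
    refine ⟨(a, w), (b, w), by simp [hab], ?_⟩
    rintro (h | ⟨h, -⟩)
    exacts [hnadj h, hab h]
  · obtain ⟨a, b, hab, hnadj⟩ := ne_top_iff_exists_not_adj.mp hH
    let v : V := Classical.arbitrary V
    refine ⟨(v, a), (v, b), by simp [hab], ?_⟩
    rintro (h | ⟨-, h⟩)
    exacts [G.irrefl h, hnadj h]

end LexProd

section MutualVisibility

variable {G : SimpleGraph V}

lemma adj_of_isMVSet_univ (h : IsMVSet G Set.univ) {x y : V} (hxy : x ≠ y)
    (hr : G.Reachable x y) : G.Adj x y := by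
  obtain ⟨p, -, hp⟩ := h x trivial y trivial hxy hr
  cases p with
  | nil => exact absurd rfl hxy
  | cons e q =>
    by_contra hnadj
    exact hp _ (by simp) e.ne.symm (by rintro rfl; exact hnadj e) trivial

lemma SimpleGraph.Connected.eq_top_of_isMVSet_univ (hconn : G.Connected)
    (h : IsMVSet G Set.univ) : G = ⊤ := by
  ext x y
  exact ⟨Adj.ne, fun hxy => adj_of_isMVSet_univ h hxy (hconn x y)⟩

lemma two_le_of_isMVSet_preimage [Nonempty V] {k : ℕ} (f : V → Fin k)
    (hf : ∀ i, IsMVSet G (f ⁻¹' {i})) (huniv : ¬ IsMVSet G Set.univ) : 2 ≤ k := by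
  rcases k with _ | _ | k
  · exact (f (Classical.arbitrary V)).elim0
  · refine absurd ?_ huniv
    convert hf 0
    ext x
    simp [Fin.fin_one_eq_zero (f x)]
  · omega

lemma mvChrom_eq_two [Nonempty V] (h2 : ∃ f : V → Fin 2, ∀ i, IsMVSet G (f ⁻¹' {i}))
    (huniv : ¬ IsMVSet G Set.univ) : mvChrom G = 2 := by
  obtain ⟨f, hf⟩ : mvChrom G ∈ {k | ∃ f : V → Fin k, ∀ i, IsMVSet G (f ⁻¹' {i})} :=
    Nat.sInf_mem ⟨2, h2⟩
  exact le_antisymm (Nat.sInf_le h2) (two_le_of_isMVSet_preimage f hf huniv)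

end MutualVisibility

theorem stmt17 [Fintype V] [Fintype W] (G : SimpleGraph V) (H : SimpleGraph W)
    (hconn : G.Connected) (hV : 2 ≤ Fintype.card V) (hW : 2 ≤ Fintype.card W)
    (hnc : G ≠ ⊤ ∨ H ≠ ⊤) :
    mvChrom (lexProd G H) = 2 := by
  classical
  have : Nontrivial V := Fintype.one_lt_card_iff_nontrivial.mp hV
  have : Nontrivial W := Fintype.one_lt_card_iff_nontrivial.mp hW
  obtain ⟨w₀, w₁, hw⟩ := exists_pair_ne W
  have hG := hconn.preconnected.exists_adj_of_nontrivial
  let f : V × W → Fin 2 := fun z => if z.2 = w₀ then 0 else 1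
  refine mvChrom_eq_two ⟨f, fun i => ?_⟩ fun huniv =>
    lexProd_ne_top hnc ((lexProd_connected hconn).eq_top_of_isMVSet_univ huniv)
  fin_cases i
  · refine isMVSet_lexProd_of_forall_snd_ne hG w₁ fun z hz hzw => ?_
    simp [f, hzw, hw.symm] at hz
  · exact isMVSet_lexProd_of_forall_snd_ne hG w₀ fun z hz hzw => by simp [f, hzw] at hz
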